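/- Let 2 ≤ k ≤ n and write n = kq + r with 0 ≤ r < k. Then there exists a k*-dense graph on n vertices with exactly q·C(k,2) + C(r,2) + r(k−r) edges. -/

import Mathlib

/-!
Take `q` disjoint copies of `K_k` and add a `K_r` on `r` further vertices, joined to `k - r`
vertices of the first copy. Every edge then lies in a `k`-clique (a copy, or the extra vertices
together with their `k - r` neighbours in the first copy), so the graph is `k`-dense; an edge of
the first copy at a vertex without extra neighbours has only `k - 2` common neighbours, so it is
not `(k+1)`-dense. The edges are counted by the degree sum: every vertex has degree `k - 1`,
except the `k - r` joined vertices of the first copy, which gain `r`.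
-/

/-- A graph `G` is `k`-dense if every two adjacent vertices have at least `k - 2`
common neighbors. -/
def kDense {V : Type*} (G : SimpleGraph V) (k : ℕ) : Prop :=
  ∀ u v : V, G.Adj u v → k - 2 ≤ (G.neighborSet u ∩ G.neighborSet v).ncard

/-- A graph is `k*`-dense if it is `k`-dense but not `(k+1)`-dense. -/
def kStarDense {V : Type*} (G : SimpleGraph V) (k : ℕ) : Prop :=
  kDense G k ∧ ¬ kDense G (k + 1)

open Finset SimpleGraph

theorem Nat.two_mul_choose_two (m : ℕ) : 2 * m.choose 2 = m * (m - 1) := by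
  rw [Nat.choose_two_right, Nat.mul_div_cancel' (Nat.even_mul_pred_self m).two_dvd]

namespace SimpleGraph.Iso

variable {V W : Type*} {G : SimpleGraph V} {G' : SimpleGraph W}

theorem kDense_of_kDense (f : G ≃g G') {k : ℕ} (h : kDense G' k) : kDense G k := by
  intro u v huv
  rw [← Set.ncard_image_of_injective _ f.injective, Set.image_inter f.injective,
    f.image_neighborSet, f.image_neighborSet]
  exact h _ _ (f.map_adj_iff.mpr huv)

theorem kDense_iff (f : G ≃g G') {k : ℕ} : kDense G k ↔ kDense G' k :=
  ⟨f.symm.kDense_of_kDense, f.kDense_of_kDense⟩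

theorem kStarDense_iff (f : G ≃g G') {k : ℕ} : kStarDense G k ↔ kStarDense G' k := by
  rw [kStarDense, kStarDense, f.kDense_iff, f.kDense_iff]

theorem ncard_edgeSet_eq (f : G ≃g G') : G.edgeSet.ncard = G'.edgeSet.ncard :=
  Set.ncard_congr' f.mapEdgeSet

end SimpleGraph.Iso

section Criteria

variable {V : Type*} {G : SimpleGraph V} {k : ℕ}

theorem kDense_of_forall_adj_exists_isNClique [Finite V]
    (h : ∀ u v, G.Adj u v → ∃ s, G.IsNClique k s ∧ u ∈ s ∧ v ∈ s) : kDense G k := by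
  classical
  intro u v huv
  obtain ⟨s, hs, hu, hv⟩ := h u v huv
  have hsub : (((s.erase u).erase v : Finset V) : Set V) ⊆
      G.neighborSet u ∩ G.neighborSet v := by
    intro w hw
    simp only [coe_erase, Set.mem_sdiff, mem_coe, Set.mem_singleton_iff] at hw
    exact ⟨hs.isClique hu hw.1.1 (Ne.symm hw.1.2), hs.isClique hv hw.1.1 (Ne.symm hw.2)⟩
  calc k - 2 = #((s.erase u).erase v) := by
        rw [card_erase_of_mem (mem_erase.mpr ⟨huv.ne', hv⟩), card_erase_of_mem hu, hs.card_eq]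
        omega
    _ ≤ _ := by
        rw [← Set.ncard_coe_finset]
        exact Set.ncard_le_ncard hsub (Set.toFinite _)

theorem not_kDense_succ_of_neighborSet_subset {u v : V} {s : Finset V} (huv : G.Adj u v)
    (hu : u ∈ s) (hN : G.neighborSet u ⊆ s) (hs : #s ≤ k) : ¬ kDense G (k + 1) := by
  classical
  intro h
  have hsub : G.neighborSet u ∩ G.neighborSet v ⊆ ((s.erase u).erase v : Finset V) := by
    rintro w ⟨hwu, hwv⟩
    simp only [coe_erase, Set.mem_sdiff, mem_coe, Set.mem_singleton_iff]
    exact ⟨⟨hN hwu, hwu.ne'⟩, hwv.ne'⟩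
  have hcard : #((s.erase u).erase v) = #s - 1 - 1 := by
    rw [card_erase_of_mem (mem_erase.mpr ⟨huv.ne', hN huv⟩), card_erase_of_mem hu]
  have hs2 : 1 < #s := one_lt_card.mpr ⟨u, hu, v, hN huv, huv.ne⟩
  have := (h u v huv).trans (Set.ncard_le_ncard hsub (finite_toSet _))
  rw [Set.ncard_coe_finset, hcard] at this
  omega

end Criteria

/-- `inl (i, a)` is vertex `a` of the `i`-th copy of `K_k`, `inr x` is one of the `r` extra
vertices; the extra vertices are joined to the vertices `a < k - r` of copy `0`. -/
def cliqueCopiesJoin (q k r : ℕ) : SimpleGraph (Fin q × Fin k ⊕ Fin r) where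
  Adj
    | .inl (i, a), .inl (j, b) => i = j ∧ a ≠ b
    | .inr x, .inr y => x ≠ y
    | .inl (i, a), .inr _ | .inr _, .inl (i, a) => i.val = 0 ∧ a.val < k - r
  symm := ⟨by rintro (⟨i, a⟩ | x) (⟨j, b⟩ | y) h <;> simp_all [eq_comm]⟩
  loopless := ⟨by rintro (⟨i, a⟩ | x) h <;> simp_all⟩

instance (q k r : ℕ) : DecidableRel (cliqueCopiesJoin q k r).Adj
  | .inl (i, a), .inl (j, b) => inferInstanceAs (Decidable (i = j ∧ a ≠ b))
  | .inr x, .inr y => inferInstanceAs (Decidable (x ≠ y))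
  | .inl (i, a), .inr _ => inferInstanceAs (Decidable (i.val = 0 ∧ a.val < k - r))
  | .inr _, .inl (i, a) => inferInstanceAs (Decidable (i.val = 0 ∧ a.val < k - r))

namespace cliqueCopiesJoin

variable {q k r : ℕ}

@[simp] lemma adj_inl_inl {i j : Fin q} {a b : Fin k} :
    (cliqueCopiesJoin q k r).Adj (.inl (i, a)) (.inl (j, b)) ↔ i = j ∧ a ≠ b := Iff.rfl

@[simp] lemma adj_inr_inr {x y : Fin r} :
    (cliqueCopiesJoin q k r).Adj (.inr x) (.inr y) ↔ x ≠ y := Iff.rfl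

@[simp] lemma adj_inl_inr {i : Fin q} {a : Fin k} {x : Fin r} :
    (cliqueCopiesJoin q k r).Adj (.inl (i, a)) (.inr x) ↔ i.val = 0 ∧ a.val < k - r := Iff.rfl

@[simp] lemma adj_inr_inl {i : Fin q} {a : Fin k} {x : Fin r} :
    (cliqueCopiesJoin q k r).Adj (.inr x) (.inl (i, a)) ↔ i.val = 0 ∧ a.val < k - r := Iff.rfl

def copy (q k r : ℕ) (i : Fin q) : Finset (Fin q × Fin k ⊕ Fin r) :=
  univ.map ((Function.Embedding.sectR i (Fin k)).trans .inl)

def joinClique (q k r : ℕ) [NeZero q] : Finset (Fin q × Fin k ⊕ Fin r) :=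
  ((univ.filter fun a : Fin k => a.val < k - r).map (Function.Embedding.sectR 0 (Fin k))).disjSum
    univ

lemma isNClique_copy (i : Fin q) : (cliqueCopiesJoin q k r).IsNClique k (copy q k r i) :=
  ⟨by simp [IsClique, Set.Pairwise, copy], by simp [copy]⟩

lemma isNClique_joinClique [NeZero q] (hr : r ≤ k) :
    (cliqueCopiesJoin q k r).IsNClique k (joinClique q k r) :=
  ⟨by simp +contextual [IsClique, Set.Pairwise, joinClique], by
    rw [joinClique, card_disjSum, card_map, Fin.card_filter_val_lt, card_univ, Fintype.card_fin]
    omega⟩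

lemma degree_inl (i : Fin q) (a : Fin k) : (cliqueCopiesJoin q k r).degree (.inl (i, a)) =
    k - 1 + if i.val = 0 ∧ a.val < k - r then r else 0 := by
  rw [← card_neighborFinset_eq_degree, neighborFinset_eq_filter, card_filter,
    Fintype.sum_sum_type, Fintype.sum_prod_type]
  simp [ite_and, Finset.sum_ite, Finset.filter_ne]

lemma degree_inr [NeZero q] (x : Fin r) :
    (cliqueCopiesJoin q k r).degree (.inr x) = k - r + (r - 1) := by
  rw [← card_neighborFinset_eq_degree, neighborFinset_eq_filter, card_filter,
    Fintype.sum_sum_type, Fintype.sum_prod_type]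
  simp [ite_and, Finset.sum_ite, Finset.filter_ne, Fin.card_filter_val_lt]

lemma two_mul_card_edgeFinset [NeZero q] : 2 * #(cliqueCopiesJoin q k r).edgeFinset =
    q * (k * (k - 1)) + (k - r) * r + r * (k - r + (r - 1)) := by
  rw [← sum_degrees_eq_twice_card_edges, Fintype.sum_sum_type, Fintype.sum_prod_type]
  simp [degree_inl, degree_inr, sum_add_distrib, ite_and, Finset.sum_ite, Fin.card_filter_val_lt]

end cliqueCopiesJoin

section

open cliqueCopiesJoin

variable {q k r : ℕ} [NeZero q]

theorem kDense_cliqueCopiesJoin (hr : r ≤ k) : kDense (cliqueCopiesJoin q k r) k := by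
  refine kDense_of_forall_adj_exists_isNClique ?_
  rintro (⟨i, a⟩ | x) (⟨j, b⟩ | y) h
  · exact ⟨copy q k r i, isNClique_copy i, by simp [copy], by simp_all [copy]⟩
  all_goals exact ⟨joinClique q k r, isNClique_joinClique hr, by simp_all [joinClique]⟩

theorem not_kDense_succ_cliqueCopiesJoin (hk : 2 ≤ k) :
    ¬ kDense (cliqueCopiesJoin q k r) (k + 1) := by
  -- `u` is the last vertex of copy `0`; it is joined to the extra vertices only when `r = 0`,
  -- that is, when there are none
  refine not_kDense_succ_of_neighborSet_subset (u := .inl (0, ⟨k - 1, by omega⟩))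
    (v := .inl (0, ⟨0, by omega⟩)) (s := copy q k r 0) ?_ (by simp [copy]) ?_ (by simp [copy])
  · exact adj_inl_inl.mpr ⟨rfl, Fin.ne_of_val_ne (show k - 1 ≠ 0 by omega)⟩
  · rintro (⟨j, b⟩ | x) h
    · simp_all [copy]
    · have hlt : k - 1 < k - r := (adj_inl_inr (x := x).mp h).2
      exact absurd x.isLt (by omega)

theorem card_edgeFinset_cliqueCopiesJoin : #(cliqueCopiesJoin q k r).edgeFinset =
    q * k.choose 2 + r.choose 2 + r * (k - r) := by
  have h := two_mul_card_edgeFinset (q := q) (k := k) (r := r)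
  rw [mul_add r, ← Nat.two_mul_choose_two, ← Nat.two_mul_choose_two] at h
  linarith

end

/-- For 2 ≤ k ≤ n with n = kq + r, 0 ≤ r < k, there is a k*-dense graph on n
vertices with q·C(k,2) + C(r,2) + r(k−r) edges. -/
theorem exists_kStarDense_with_edges (k n q r : ℕ) (hk : 2 ≤ k) (hkn : k ≤ n)
    (hqr : n = k * q + r) (hr : r < k) :
    ∃ G : SimpleGraph (Fin n), kStarDense G k ∧
      G.edgeSet.ncard = q * Nat.choose k 2 + Nat.choose r 2 + r * (k - r) := by
  have : NeZero q := ⟨by rintro rfl; omega⟩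
  let e : Fin n ≃ Fin q × Fin k ⊕ Fin r :=
    Fintype.equivOfCardEq (by simp [hqr, mul_comm])
  let f := Iso.comap e (cliqueCopiesJoin q k r)
  refine ⟨_, f.kStarDense_iff.mpr ⟨kDense_cliqueCopiesJoin hr.le,
    not_kDense_succ_cliqueCopiesJoin hk⟩, ?_⟩
  rw [f.ncard_edgeSet_eq, ← coe_edgeFinset, Set.ncard_coe_finset,
    card_edgeFinset_cliqueCopiesJoin]
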